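/- arXiv:1911.09310 — 4 statements merged into one kernel-verified Lean document; each statement's English description precedes it below -/
import Mathlib

section
/- Let X be a measurable space, let μ_s and μ_t be probability measures on X (the source and target domains), let f_s, f_t : X → Bool be measurable labeling functions, and let H be a nonempty set of measurable hypotheses h : X → Bool. Define the errors ε_s(h) = μ_s{x : h(x) ≠ f_s(x)} and ε_t(h) = μ_t{x : h(x) ≠ f_t(x)}, and the HΔH-divergence d_{HΔH}(μ_s, μ_t) = 2 · sup over pairs h, h' ∈ H of |μ_s{x : h(x) ≠ h'(x)} − μ_t{x : h(x) ≠ h'(x)}|. Then for every h ∈ H, ε_t(h) ≤ (1/2) d_{HΔH}(μ_s, μ_t) + ε_s(h) + inf over h' ∈ H of (ε_t(h') + ε_s(h')). -/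
/-!
Route the target error of `h` through an arbitrary `h' ∈ H`: by the triangle inequality for
disagreement, `ε_t(h) ≤ μ_t{h ≠ h'} + ε_t(h')`, and on the source side
`μ_s{h ≠ h'} ≤ ε_s(h) + ε_s(h')`. The gap `μ_t{h ≠ h'} - μ_s{h ≠ h'}` is one of the quantities
whose supremum is `d_{HΔH} / 2`; taking the infimum over `h'` gives the bound.
-/

open MeasureTheory

namespace MeasureTheory

variable {X β : Type*} [MeasurableSpace X]

theorem measureReal_ne_le_add {μ : Measure X} [IsFiniteMeasure μ] (f g k : X → β) :
    μ.real {x | f x ≠ k x} ≤ μ.real {x | f x ≠ g x} + μ.real {x | g x ≠ k x} := by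
  refine (measureReal_mono fun x hfk => ?_).trans (measureReal_union_le _ _)
  exact (em (f x = g x)).elim (fun hfg => Or.inr fun hgk => hfk (hfg.trans hgk)) Or.inl

theorem measureReal_ne_le_abs_sub_add_add {μs μt : Measure X} [IsFiniteMeasure μs]
    [IsFiniteMeasure μt] (fs ft h h' : X → β) :
    μt.real {x | h x ≠ ft x} ≤ |μs.real {x | h x ≠ h' x} - μt.real {x | h x ≠ h' x}| +
      μs.real {x | h x ≠ fs x} + (μt.real {x | h' x ≠ ft x} + μs.real {x | h' x ≠ fs x}) := by
  have htarget := measureReal_ne_le_add (μ := μt) h h' ft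
  have hsource := measureReal_ne_le_add (μ := μs) h fs h'
  simp only [ne_comm (a := fs _)] at hsource
  have hgap := neg_abs_le (μs.real {x | h x ≠ h' x} - μt.real {x | h x ≠ h' x})
  linarith

theorem abs_measureReal_sub_le_one {μs μt : Measure X} [IsZeroOrProbabilityMeasure μs]
    [IsZeroOrProbabilityMeasure μt] (s : Set X) : |μs.real s - μt.real s| ≤ 1 :=
  abs_sub_le_of_nonneg_of_le measureReal_nonneg measureReal_le_one
    measureReal_nonneg measureReal_le_one

end MeasureTheory

theorem target_error_bound_general
    {X : Type*} [MeasurableSpace X]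
    (μs μt : Measure X) [IsProbabilityMeasure μs] [IsProbabilityMeasure μt]
    (fs ft : X → Bool)
    (H : Set (X → Bool))
    (εs εt : (X → Bool) → ℝ)
    (hεs : ∀ h, εs h = (μs {x | h x ≠ fs x}).toReal)
    (hεt : ∀ h, εt h = (μt {x | h x ≠ ft x}).toReal)
    (d : ℝ)
    (hd : d = 2 * sSup {r : ℝ | ∃ h ∈ H, ∃ h' ∈ H,
        r = |(μs {x | h x ≠ h' x}).toReal - (μt {x | h x ≠ h' x}).toReal|})
    (h : X → Bool) (hh : h ∈ H) :
    εt h ≤ (1 / 2) * d + εs h + ⨅ h' : H, (εt h' + εs h') := by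
  have : Nonempty H := ⟨⟨h, hh⟩⟩
  rw [← sub_le_iff_le_add']
  refine le_ciInf fun ⟨h', hh'⟩ => ?_
  have hgap : |μs.real {x | h x ≠ h' x} - μt.real {x | h x ≠ h' x}| ≤ (1 / 2) * d := by
    rw [hd, ← mul_assoc, one_div_mul_cancel two_ne_zero, one_mul]
    exact le_csSup ⟨1, by rintro _ ⟨g, -, g', -, rfl⟩; exact abs_measureReal_sub_le_one _⟩
      ⟨h, hh, h', hh', rfl⟩
  have hpair := measureReal_ne_le_abs_sub_add_add (μs := μs) (μt := μt) fs ft h h'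
  simp only [hεs, hεt, ← measureReal_def]
  linarith

/-- **Ben-David et al. domain adaptation bound (Theorem 1).**
For any hypothesis `h` in the class `H`, the target error is bounded by half the
`HΔH`-divergence between source and target, plus the source error of `h`, plus the
infimum over `H` of the combined source and target errors. -/
theorem target_error_bound
    {X : Type*} [MeasurableSpace X]
    (μs μt : Measure X) [IsProbabilityMeasure μs] [IsProbabilityMeasure μt]
    (fs ft : X → Bool) (hfs : Measurable fs) (hft : Measurable ft)
    (H : Set (X → Bool)) (hH : H.Nonempty) (hHmeas : ∀ h ∈ H, Measurable h)
    (εs εt : (X → Bool) → ℝ)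
    (hεs : ∀ h, εs h = (μs {x | h x ≠ fs x}).toReal)
    (hεt : ∀ h, εt h = (μt {x | h x ≠ ft x}).toReal)
    (d : ℝ)
    (hd : d = 2 * sSup {r : ℝ | ∃ h ∈ H, ∃ h' ∈ H,
        r = |(μs {x | h x ≠ h' x}).toReal - (μt {x | h x ≠ h' x}).toReal|})
    (h : X → Bool) (hh : h ∈ H) :
    εt h ≤ (1 / 2) * d + εs h + ⨅ h' : H, (εt h' + εs h') :=
  target_error_bound_general μs μt fs ft H εs εt hεs hεt d hd h hh
end

section
/- Let X, Y, Z be nonempty finite types. Let p be a probability mass function on X × Y, let g : X → (probability mass function on Z) be a stochastic feature extractor, and define the joint distribution on X × Y × Z by p(x,y,z) = p(x,y)·g(x)(z) (the Markov chain Y → X → Z). Let h : Z → (probability mass function on Y) be any variational classifier, assumed strictly positive wherever the induced joint distribution of (Y,Z) is positive. Then Σ_{x,y,z} p(x,y)·g(x)(z)·log( h(z)(y) ) ≤ I(Y;Z) − H(Y), where I(Y;Z) is the mutual information of the induced joint distribution of (Y,Z) and H(Y) is the Shannon entropy of the Y-marginal of p. In particular, minimizing the expected cross-entropy loss maximizes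 a lower bound on I(Y;Z). -/
open Finset

/-- Mutual information of a joint probability mass function on `A × B`
(with the convention `0 · log 0 = 0`, which holds automatically in `ℝ`). -/
noncomputable def mutualInfo {A B : Type} [Fintype A] [Fintype B] (p : A × B → ℝ) : ℝ :=
  ∑ a : A, ∑ b : B,
    p (a, b) * Real.log (p (a, b) / ((∑ b' : B, p (a, b')) * (∑ a' : A, p (a', b))))

/-- Shannon entropy of a probability mass function (convention `0 · log 0 = 0`). -/
noncomputable def shannonEntropy {A : Type} [Fintype A] (q : A → ℝ) : ℝ :=
  -∑ a : A, q a * Real.log (q a)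

/-- The joint distribution of `(Y, Z)` induced by a joint distribution `p` on `X × Y`
and a channel `g : X → PMF Z` (Markov chain `Y → X → Z`). -/
noncomputable def jointYZ {X Y Z : Type} [Fintype X] [Fintype Y] [Fintype Z]
    (p : X × Y → ℝ) (g : X → Z → ℝ) : Y × Z → ℝ :=
  fun yz => ∑ x : X, p (x, yz.1) * g x yz.2

open Real

/-! Summing over `y` for each fixed `z`, Gibbs' inequality bounds the expected `log h(y|z)` by the
expected `log q(y|z)`, the log of the true posterior of the induced joint `q` of `(Y, Z)`. The latter
is `-H(Y|Z) = I(Y;Z) - H(Y)`. -/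

lemma mul_log_sub_mul_log_div_le {r s k : ℝ} (hr : 0 ≤ r) (hrs : r ≤ s) (hk : 0 ≤ k)
    (hrk : 0 < r → 0 < k) :
    r * log k - r * log (r / s) ≤ k * s - r := by
  rcases hr.eq_or_lt with rfl | hr
  · simpa using mul_nonneg hk hrs
  have hk := hrk hr
  have hs := hr.trans_le hrs
  calc r * log k - r * log (r / s) = r * log (k * s / r) := by
        rw [log_div hr.ne' hs.ne', log_div (by positivity) hr.ne', log_mul hk.ne' hs.ne']
        ring
    _ ≤ r * (k * s / r - 1) := by gcongr; exact log_le_sub_one_of_pos (by positivity)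
    _ = k * s - r := by field_simp

/-- Gibbs' inequality against a sub-probability vector `k`, for unnormalized weights `r`. -/
lemma sum_mul_log_le_sum_mul_log_div_sum {ι : Type*} (t : Finset ι) (r k : ι → ℝ)
    (hr : ∀ i ∈ t, 0 ≤ r i) (hk : ∀ i ∈ t, 0 ≤ k i) (hk1 : ∑ i ∈ t, k i ≤ 1)
    (hrk : ∀ i ∈ t, 0 < r i → 0 < k i) :
    ∑ i ∈ t, r i * log (k i) ≤ ∑ i ∈ t, r i * log (r i / ∑ j ∈ t, r j) := by
  set s := ∑ j ∈ t, r j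
  have hs : 0 ≤ s := sum_nonneg hr
  have hpointwise : ∀ i ∈ t, r i * log (k i) - r i * log (r i / s) ≤ k i * s - r i :=
    fun i hi => mul_log_sub_mul_log_div_le (hr i hi) (single_le_sum hr hi) (hk i hi) (hrk i hi)
  have htotal : ∑ i ∈ t, (k i * s - r i) ≤ 0 := by
    rw [sum_sub_distrib, ← sum_mul]
    nlinarith
  have := (sum_le_sum hpointwise).trans htotal
  rw [sum_sub_distrib] at this
  linarith

lemma mul_log_div_mul_add_mul_log {q m n : ℝ} (hq : 0 ≤ q) (hqm : q ≤ m) (hqn : q ≤ n) :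
    q * log (q / (m * n)) + q * log m = q * log (q / n) := by
  rcases hq.eq_or_lt with rfl | hq
  · simp
  have hm := hq.trans_le hqm
  have hn := hq.trans_le hqn
  rw [log_div hq.ne' (by positivity), log_mul hm.ne' hn.ne', log_div hq.ne' hn.ne']
  ring

/-- `I(A;B) - H(A) = -H(A|B)`. -/
lemma mutualInfo_sub_shannonEntropy_fst {A B : Type} [Fintype A] [Fintype B] (q : A × B → ℝ)
    (hq : ∀ ab, 0 ≤ q ab) :
    mutualInfo q - shannonEntropy (fun a => ∑ b : B, q (a, b)) =
      ∑ a : A, ∑ b : B, q (a, b) * log (q (a, b) / ∑ a' : A, q (a', b)) := by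
  rw [mutualInfo, shannonEntropy, sub_neg_eq_add, ← sum_add_distrib]
  refine sum_congr rfl fun a _ => ?_
  rw [sum_mul, ← sum_add_distrib]
  refine sum_congr rfl fun b _ => ?_
  exact mul_log_div_mul_add_mul_log (hq _)
    (single_le_sum (f := fun b' => q (a, b')) (fun _ _ => hq _) (mem_univ b))
    (single_le_sum (f := fun a' => q (a', b)) (fun _ _ => hq _) (mem_univ a))

section jointYZ

variable {X Y Z : Type} [Fintype X] [Fintype Y] [Fintype Z]

lemma jointYZ_nonneg {p : X × Y → ℝ} (hp0 : ∀ xy, 0 ≤ p xy) {g : X → Z → ℝ}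
    (hg0 : ∀ x z, 0 ≤ g x z) (yz : Y × Z) : 0 ≤ jointYZ p g yz :=
  sum_nonneg fun _ _ => mul_nonneg (hp0 _) (hg0 _ _)

lemma sum_jointYZ_snd (p : X × Y → ℝ) {g : X → Z → ℝ} (hg1 : ∀ x, ∑ z : Z, g x z = 1) (y : Y) :
    ∑ z : Z, jointYZ p g (y, z) = ∑ x : X, p (x, y) := by
  simp only [jointYZ]
  rw [sum_comm]
  simp only [← mul_sum, hg1, mul_one]

lemma sum_mul_mul_eq_sum_jointYZ_mul (p : X × Y → ℝ) (g : X → Z → ℝ) (f : Y → Z → ℝ) :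
    ∑ x : X, ∑ y : Y, ∑ z : Z, p (x, y) * g x z * f y z =
      ∑ z : Z, ∑ y : Y, jointYZ p g (y, z) * f y z := by
  simp only [jointYZ, sum_mul]
  calc _ = ∑ y : Y, ∑ x : X, ∑ z : Z, p (x, y) * g x z * f y z := sum_comm
    _ = ∑ y : Y, ∑ z : Z, ∑ x : X, p (x, y) * g x z * f y z := sum_congr rfl fun _ _ => sum_comm
    _ = _ := sum_comm

end jointYZ

theorem cross_entropy_variational_lower_bound_general
    {X Y Z : Type} [Fintype X] [Fintype Y] [Fintype Z]
    (p : X × Y → ℝ) (hp0 : ∀ xy, 0 ≤ p xy)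
    (g : X → Z → ℝ) (hg0 : ∀ x z, 0 ≤ g x z) (hg1 : ∀ x, ∑ z : Z, g x z = 1)
    (h : Z → Y → ℝ) (hh0 : ∀ z y, 0 ≤ h z y) (hh1 : ∀ z, ∑ y : Y, h z y = 1)
    (hpos : ∀ y z, 0 < ∑ x : X, p (x, y) * g x z → 0 < h z y) :
    ∑ x : X, ∑ y : Y, ∑ z : Z, p (x, y) * g x z * Real.log (h z y) ≤
      mutualInfo (jointYZ p g) - shannonEntropy (fun y => ∑ x : X, p (x, y)) := by
  set q := jointYZ p g
  have hq0 := jointYZ_nonneg hp0 hg0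
  calc ∑ x : X, ∑ y : Y, ∑ z : Z, p (x, y) * g x z * log (h z y)
      = ∑ z : Z, ∑ y : Y, q (y, z) * log (h z y) :=
        sum_mul_mul_eq_sum_jointYZ_mul p g fun y z => log (h z y)
    _ ≤ ∑ z : Z, ∑ y : Y, q (y, z) * log (q (y, z) / ∑ y' : Y, q (y', z)) :=
        sum_le_sum fun z _ => sum_mul_log_le_sum_mul_log_div_sum univ (fun y => q (y, z)) (h z)
          (fun y _ => hq0 _) (fun y _ => hh0 z y) (hh1 z).le (fun y _ => hpos y z)
    _ = mutualInfo q - shannonEntropy (fun y => ∑ z : Z, q (y, z)) :=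
        sum_comm.trans (mutualInfo_sub_shannonEntropy_fst q hq0).symm
    _ = mutualInfo q - shannonEntropy (fun y => ∑ x : X, p (x, y)) := by
        simp only [q, sum_jointYZ_snd p hg1]

/-- **Variational lower bound on the mutual information (Section 4.1).**
For any variational classifier `h : Z → PMF Y` (positive wherever the induced joint of
`(Y,Z)` is), the expected log-likelihood `𝔼[log h(y|z)]` (the negative cross-entropy loss)
is at most `I(Y;Z) - H(Y)`. -/
theorem cross_entropy_variational_lower_bound
    {X Y Z : Type} [Fintype X] [Fintype Y] [Fintype Z]
    [Nonempty X] [Nonempty Y] [Nonempty Z]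
    (p : X × Y → ℝ) (hp0 : ∀ xy, 0 ≤ p xy) (hp1 : ∑ xy : X × Y, p xy = 1)
    (g : X → Z → ℝ) (hg0 : ∀ x z, 0 ≤ g x z) (hg1 : ∀ x, ∑ z : Z, g x z = 1)
    (h : Z → Y → ℝ) (hh0 : ∀ z y, 0 ≤ h z y) (hh1 : ∀ z, ∑ y : Y, h z y = 1)
    (hpos : ∀ y z, 0 < ∑ x : X, p (x, y) * g x z → 0 < h z y) :
    ∑ x : X, ∑ y : Y, ∑ z : Z, p (x, y) * g x z * Real.log (h z y) ≤
      mutualInfo (jointYZ p g) - shannonEntropy (fun y => ∑ x : X, p (x, y)) :=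
  cross_entropy_variational_lower_bound_general p hp0 g hg0 hg1 h hh0 hh1 hpos
end

section
/- Let X, Z be nonempty finite types, let p_X be a probability mass function on X, and let g : X → (probability mass function on Z) be a channel, with joint distribution p(x,z) = p_X(x)·g(x)(z) and Z-marginal p_Z. Let r be any probability mass function on Z that is strictly positive wherever g(x) is positive for some x with p_X(x) > 0. Then I(X;Z) ≤ Σ_x p_X(x)·D_KL( g(x) ‖ r ), and equality holds if and only if p_Z = r. -/
open Finset

/-- Kullback–Leibler divergence between probability mass functions on a finite type
(conventions `0 · log 0 = 0`, handled automatically in `ℝ`). -/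
noncomputable def klDiv {A : Type} [Fintype A] (q r : A → ℝ) : ℝ :=
  ∑ a : A, q a * Real.log (q a / r a)

/-!
Expanding `log (p(x,z) / (p_X(x) p_Z(z)))` as `log (g x z / r z) - log (p_Z z / r z)` gives
`I(X;Z) = ∑ₓ p_X(x) D_KL(g x ‖ r) - D_KL(p_Z ‖ r)`, so both claims follow from Gibbs' inequality
`D_KL(p_Z ‖ r) ≥ 0` with equality iff `p_Z = r`. Gibbs' inequality is summed termwise from
`q log (q / r) - (q - r) = r · klFun (q / r) ≥ 0`, whose equality case is `q = r`.
-/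

open Real
open InformationTheory (klFun klFun_apply klFun_nonneg klFun_eq_zero_iff)

section Gibbs

lemma mul_log_div_sub_sub_eq_mul_klFun {q r : ℝ} (hr : 0 < r) :
    q * log (q / r) - (q - r) = r * klFun (q / r) := by
  rw [klFun_apply]
  field_simp
  ring

lemma sub_le_mul_log_div {q r : ℝ} (hq : 0 ≤ q) (hr : 0 ≤ r) (hqr : 0 < q → 0 < r) :
    q - r ≤ q * log (q / r) := by
  rcases hr.eq_or_lt with rfl | hr
  · obtain rfl : q = 0 := le_antisymm (not_lt.1 fun h => (hqr h).false) hq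
    simp
  · have := mul_nonneg hr.le (klFun_nonneg (div_nonneg hq hr.le))
    rw [← mul_log_div_sub_sub_eq_mul_klFun hr] at this
    linarith

lemma mul_log_div_eq_sub_iff {q r : ℝ} (hq : 0 ≤ q) (hr : 0 ≤ r) (hqr : 0 < q → 0 < r) :
    q * log (q / r) = q - r ↔ q = r := by
  rcases hr.eq_or_lt with rfl | hr
  · obtain rfl : q = 0 := le_antisymm (not_lt.1 fun h => (hqr h).false) hq
    simp
  · rw [← sub_eq_zero, mul_log_div_sub_sub_eq_mul_klFun hr, mul_eq_zero,
      klFun_eq_zero_iff (div_nonneg hq hr.le), div_eq_one_iff_eq hr.ne']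
    simp [hr.ne']

variable {A : Type} [Fintype A] {q r : A → ℝ}

lemma klDiv_eq_sum_sub_sub (hsum : ∑ a, q a = ∑ a, r a) :
    klDiv q r = ∑ a, (q a * log (q a / r a) - (q a - r a)) := by
  simp [klDiv, sum_sub_distrib, hsum]

lemma klDiv_nonneg (hq : ∀ a, 0 ≤ q a) (hr : ∀ a, 0 ≤ r a) (hqr : ∀ a, 0 < q a → 0 < r a)
    (hsum : ∑ a, q a = ∑ a, r a) : 0 ≤ klDiv q r := by
  rw [klDiv_eq_sum_sub_sub hsum]
  exact sum_nonneg fun a _ => sub_nonneg.2 (sub_le_mul_log_div (hq a) (hr a) (hqr a))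

lemma klDiv_eq_zero_iff (hq : ∀ a, 0 ≤ q a) (hr : ∀ a, 0 ≤ r a)
    (hqr : ∀ a, 0 < q a → 0 < r a) (hsum : ∑ a, q a = ∑ a, r a) :
    klDiv q r = 0 ↔ q = r := by
  rw [klDiv_eq_sum_sub_sub hsum, Fintype.sum_eq_zero_iff_of_nonneg
    fun a => sub_nonneg.2 (sub_le_mul_log_div (hq a) (hr a) (hqr a)), funext_iff, funext_iff]
  simp only [Pi.zero_apply, sub_eq_zero]
  exact forall_congr' fun a => mul_log_div_eq_sub_iff (hq a) (hr a) (hqr a)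

end Gibbs

section Channel

variable {X Z : Type} [Fintype X] {pX : X → ℝ} {g : X → Z → ℝ}

lemma sum_sum_mul_channel_eq_one [Fintype Z] (hpX1 : ∑ x, pX x = 1)
    (hg1 : ∀ x, ∑ z, g x z = 1) :
    ∑ z, ∑ x, pX x * g x z = 1 := by
  rw [sum_comm]
  simp [← mul_sum, hg1, hpX1]

lemma exists_pos_of_sum_mul_channel_pos (hpX0 : ∀ x, 0 ≤ pX x) (hg0 : ∀ x z, 0 ≤ g x z)
    {z : Z} (hz : 0 < ∑ x, pX x * g x z) : ∃ x, 0 < pX x ∧ 0 < g x z := by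
  obtain ⟨x, -, hx⟩ :=
    (sum_pos_iff_of_nonneg fun x _ => mul_nonneg (hpX0 x) (hg0 x z)).1 hz
  exact ⟨x, (pos_and_pos_or_neg_and_neg_of_mul_pos hx).resolve_right
    fun h => (hpX0 x).not_gt h.1⟩

lemma mutualInfo_eq_sum_mul_klDiv_sub_klDiv [Fintype Z] {r : Z → ℝ}
    (hpX0 : ∀ x, 0 ≤ pX x) (hg0 : ∀ x z, 0 ≤ g x z) (hg1 : ∀ x, ∑ z, g x z = 1)
    (hrpos : ∀ z, (∃ x, 0 < pX x ∧ 0 < g x z) → 0 < r z) :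
    mutualInfo (fun xz : X × Z => pX xz.1 * g xz.1 xz.2) =
      ∑ x, pX x * klDiv (g x) r - klDiv (fun z => ∑ x, pX x * g x z) r := by
  set pZ : Z → ℝ := fun z => ∑ x, pX x * g x z with hpZ
  have hrow : ∀ x, ∑ z, pX x * g x z = pX x := fun x => by rw [← mul_sum, hg1, mul_one]
  have hklZ : klDiv pZ r = ∑ x, ∑ z, pX x * g x z * log (pZ z / r z) := by
    rw [klDiv, sum_comm]
    simp only [hpZ, sum_mul]
  simp only [mutualInfo, hrow]
  rw [hklZ, ← sum_sub_distrib]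
  refine sum_congr rfl fun x _ => ?_
  rw [klDiv, mul_sum, ← sum_sub_distrib]
  refine sum_congr rfl fun z _ => ?_
  rcases (hpX0 x).eq_or_lt with hx | hx
  · simp [← hx]
  rcases (hg0 x z).eq_or_lt with hxz | hxz
  · simp [← hxz]
  have hm : 0 < pZ z := (mul_pos hx hxz).trans_le <|
    single_le_sum (fun x' _ => mul_nonneg (hpX0 x') (hg0 x' z)) (mem_univ x)
  have hr : 0 < r z := hrpos z ⟨x, hx, hxz⟩
  rw [mul_div_mul_left _ _ hx.ne', log_div hxz.ne' hm.ne', log_div hxz.ne' hr.ne',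
    log_div hm.ne' hr.ne']
  ring

end Channel

theorem mutualInfo_le_expected_klDiv_general
    {X Z : Type} [Fintype X] [Fintype Z]
    (pX : X → ℝ) (hpX0 : ∀ x, 0 ≤ pX x) (hpX1 : ∑ x : X, pX x = 1)
    (g : X → Z → ℝ) (hg0 : ∀ x z, 0 ≤ g x z) (hg1 : ∀ x, ∑ z : Z, g x z = 1)
    (r : Z → ℝ) (hr0 : ∀ z, 0 ≤ r z) (hr1 : ∑ z : Z, r z = 1)
    (hrpos : ∀ z, (∃ x, 0 < pX x ∧ 0 < g x z) → 0 < r z) :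
    mutualInfo (fun xz : X × Z => pX xz.1 * g xz.1 xz.2) ≤
      ∑ x : X, pX x * klDiv (g x) r ∧
    (mutualInfo (fun xz : X × Z => pX xz.1 * g xz.1 xz.2) =
        ∑ x : X, pX x * klDiv (g x) r ↔
      (fun z => ∑ x : X, pX x * g x z) = r) := by
  have hpZ0 : ∀ z, 0 ≤ ∑ x, pX x * g x z := fun z =>
    sum_nonneg fun x _ => mul_nonneg (hpX0 x) (hg0 x z)
  have hpZr : ∀ z, 0 < ∑ x, pX x * g x z → 0 < r z := fun z hz =>
    hrpos z (exists_pos_of_sum_mul_channel_pos hpX0 hg0 hz)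
  have hsum : ∑ z, ∑ x, pX x * g x z = ∑ z, r z := by
    rw [sum_sum_mul_channel_eq_one hpX1 hg1, hr1]
  rw [mutualInfo_eq_sum_mul_klDiv_sub_klDiv hpX0 hg0 hg1 hrpos, sub_eq_self]
  exact ⟨sub_le_self _ (klDiv_nonneg hpZ0 hr0 hpZr hsum), klDiv_eq_zero_iff hpZ0 hr0 hpZr hsum⟩

/-- **Variational information bottleneck upper bound `I_U(X;Z)` (Equation (6)).**
`I(X;Z) ≤ ∑_x p_X(x) D_KL(g(x) ‖ r)`, with equality if and only if the marginal `p_Z`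
of the representation equals the variational prior `r`. -/
theorem mutualInfo_le_expected_klDiv
    {X Z : Type} [Fintype X] [Fintype Z] [Nonempty X] [Nonempty Z]
    (pX : X → ℝ) (hpX0 : ∀ x, 0 ≤ pX x) (hpX1 : ∑ x : X, pX x = 1)
    (g : X → Z → ℝ) (hg0 : ∀ x z, 0 ≤ g x z) (hg1 : ∀ x, ∑ z : Z, g x z = 1)
    (r : Z → ℝ) (hr0 : ∀ z, 0 ≤ r z) (hr1 : ∑ z : Z, r z = 1)
    (hrpos : ∀ z, (∃ x, 0 < pX x ∧ 0 < g x z) → 0 < r z) :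
    mutualInfo (fun xz : X × Z => pX xz.1 * g xz.1 xz.2) ≤
      ∑ x : X, pX x * klDiv (g x) r ∧
    (mutualInfo (fun xz : X × Z => pX xz.1 * g xz.1 xz.2) =
        ∑ x : X, pX x * klDiv (g x) r ↔
      (fun z => ∑ x : X, pX x * g x z) = r) :=
  mutualInfo_le_expected_klDiv_general pX hpX0 hpX1 g hg0 hg1 r hr0 hr1 hrpos
end

section
/- Let Z be a nonempty finite type and let q_s, q_t be probability mass functions on Z. Then the maximum over discriminators D : Z → (0,1) of the adversarial objective V(D) = Σ_z q_s(z)·log D(z) + Σ_z q_t(z)·log(1 − D(z)) equals −log 4 + 2·JSD(q_s ‖ q_t), where JSD denotes the Jensen–Shannon divergence. Consequently this maximal value is at least −log 4, with equality if and only if q_s = q_t. -/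
/-!
Pointwise in `z`, the map `D ↦ a log D + b log (1 - D)` on `(0, 1)` is bounded, by the tangent-line
bound `log x ≤ x - 1`, by its value at `D⋆ = a / (a + b)`. Since `D⋆` may equal `0` or `1`, the
supremum need not be attained; it is the limit of the objective along the segment from the
constant `1/2` to `D⋆`, which is continuous at `D⋆` because the discontinuity of `log` at `0` only
meets terms of weight `0`. Comparing `D⋆` with the midpoint `m = (qs + qt) / 2` turns the value at
`D⋆` into `-log 4 + 2 JSD`, and `2 JSD = ∑ m (klFun (qs / m) + klFun (qt / m))` with
`klFun x = x log x + 1 - x ≥ 0`, vanishing only at `x = 1`, gives the bound and its equality case.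
-/

open Finset

/-- Jensen–Shannon divergence between probability mass functions on a finite type. -/
noncomputable def jsd {A : Type} [Fintype A] (q r : A → ℝ) : ℝ :=
  (1 / 2) * klDiv q (fun a => (q a + r a) / 2) +
    (1 / 2) * klDiv r (fun a => (q a + r a) / 2)

/-- The adversarial (GAN) objective for a discriminator `D` between distributions
`qs` and `qt` on the latent space `Z` (terms with weight `0` vanish automatically). -/
noncomputable def advObjective {Z : Type} [Fintype Z] (qs qt : Z → ℝ) (D : Z → ℝ) : ℝ :=
  ∑ z : Z, qs z * Real.log (D z) + ∑ z : Z, qt z * Real.log (1 - D z)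

open Real
open InformationTheory (klFun klFun_apply klFun_nonneg klFun_eq_zero_iff klFun_one)

namespace Real

lemma mul_log_le_mul_log_add_sub {a x : ℝ} (ha : 0 ≤ a) (hx : 0 < x) :
    a * log x ≤ a * log a + (x - a) := by
  rcases ha.eq_or_lt with rfl | ha
  · simpa using hx.le
  · have h := mul_le_mul_of_nonneg_left (log_le_sub_one_of_pos (div_pos hx ha)) ha.le
    rw [log_div hx.ne' ha.ne', mul_sub_one, mul_div_cancel₀ _ ha.ne'] at h
    linarith

lemma mul_log_div {a c : ℝ} (hc : c ≠ 0) : a * log (a / c) = a * log a - a * log c := by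
  rcases eq_or_ne a 0 with rfl | ha
  · simp
  · rw [log_div ha hc, mul_sub]

lemma mul_log_add_mul_log_one_sub_le {a b d : ℝ} (ha : 0 ≤ a) (hb : 0 ≤ b) (hd0 : 0 < d)
    (hd1 : d < 1) :
    a * log d + b * log (1 - d) ≤ a * log (a / (a + b)) + b * log (1 - a / (a + b)) := by
  rcases (add_nonneg ha hb).eq_or_lt with hc | hc
  · obtain ⟨rfl, rfl⟩ := (add_eq_zero_iff_of_nonneg ha hb).1 hc.symm
    simp
  have hd := mul_log_le_mul_log_add_sub ha (mul_pos hc hd0)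
  have hd' := mul_log_le_mul_log_add_sub hb (mul_pos hc (sub_pos.2 hd1))
  rw [log_mul hc.ne' hd0.ne'] at hd
  rw [log_mul hc.ne' (sub_pos.2 hd1).ne'] at hd'
  rw [one_sub_div hc.ne', add_sub_cancel_left, mul_log_div hc.ne', mul_log_div hc.ne']
  linarith

lemma mul_log_div_half {x c : ℝ} (h : c = 0 → x = 0) :
    x * log (x / (c / 2)) = x * log (x / c) + x * log 2 := by
  rcases eq_or_ne x 0 with rfl | hx
  · simp
  · have hc : c ≠ 0 := mt h hx
    rw [div_div_eq_mul_div, mul_div_right_comm, log_mul (div_ne_zero hx hc) two_ne_zero,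
      mul_add]

end Real

lemma mul_klFun_div (q : ℝ) {r : ℝ} (hr : r ≠ 0) :
    r * klFun (q / r) = q * log (q / r) + r - q := by
  rw [klFun_apply]; field_simp

lemma klDiv_eq_sum_mul_klFun {A : Type} [Fintype A] {q r : A → ℝ}
    (hqr : ∀ a, r a = 0 → q a = 0) :
    klDiv q r = ∑ a, r a * klFun (q a / r a) + (∑ a, q a - ∑ a, r a) := by
  have hterm : ∀ a, r a * klFun (q a / r a) = q a * log (q a / r a) + r a - q a := by
    intro a
    by_cases hr : r a = 0
    · simp [hr, hqr a hr]
    · exact mul_klFun_div _ hr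
  simp only [klDiv, hterm, sum_sub_distrib, sum_add_distrib]
  ring

noncomputable def jsdSummand (q r : ℝ) : ℝ :=
  (q + r) / 2 * (klFun (q / ((q + r) / 2)) + klFun (r / ((q + r) / 2)))

lemma jsdSummand_nonneg {q r : ℝ} (hq : 0 ≤ q) (hr : 0 ≤ r) : 0 ≤ jsdSummand q r := by
  have hm : 0 ≤ (q + r) / 2 := by linarith
  exact mul_nonneg hm
    (add_nonneg (klFun_nonneg (div_nonneg hq hm)) (klFun_nonneg (div_nonneg hr hm)))

lemma jsdSummand_eq_zero_iff {q r : ℝ} (hq : 0 ≤ q) (hr : 0 ≤ r) :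
    jsdSummand q r = 0 ↔ q = r := by
  constructor
  · intro h
    rcases (show 0 ≤ (q + r) / 2 by linarith).eq_or_lt with hm | hm
    · linarith
    have hkq := klFun_nonneg (div_nonneg hq hm.le)
    have hkr := klFun_nonneg (div_nonneg hr hm.le)
    rw [jsdSummand, mul_eq_zero, or_iff_right hm.ne', add_eq_zero_iff_of_nonneg hkq hkr,
      klFun_eq_zero_iff (div_nonneg hq hm.le), klFun_eq_zero_iff (div_nonneg hr hm.le),
      div_eq_one_iff_eq hm.ne', div_eq_one_iff_eq hm.ne'] at h
    exact h.1.trans h.2.symm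
  · rintro rfl
    rcases eq_or_ne q 0 with rfl | hq0
    · simp [jsdSummand]
    · simp [jsdSummand, div_self hq0, klFun_one]

lemma jsd_eq_sum_jsdSummand {A : Type} [Fintype A] {q r : A → ℝ}
    (hq : ∀ a, 0 ≤ q a) (hr : ∀ a, 0 ≤ r a) :
    jsd q r = (1 / 2) * ∑ a, jsdSummand (q a) (r a) := by
  have hmid : ∀ a, (q a + r a) / 2 = 0 → q a = 0 ∧ r a = 0 := fun a h =>
    (add_eq_zero_iff_of_nonneg (hq a) (hr a)).1 (by linarith)
  rw [jsd, klDiv_eq_sum_mul_klFun fun a h => (hmid a h).1,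
    klDiv_eq_sum_mul_klFun fun a h => (hmid a h).2, ← sum_div, sum_add_distrib]
  simp only [jsdSummand, mul_add, sum_add_distrib]
  ring

lemma jsd_nonneg {A : Type} [Fintype A] {q r : A → ℝ}
    (hq : ∀ a, 0 ≤ q a) (hr : ∀ a, 0 ≤ r a) : 0 ≤ jsd q r := by
  rw [jsd_eq_sum_jsdSummand hq hr]
  exact mul_nonneg (by norm_num) (sum_nonneg fun a _ => jsdSummand_nonneg (hq a) (hr a))

lemma jsd_eq_zero_iff {A : Type} [Fintype A] {q r : A → ℝ}
    (hq : ∀ a, 0 ≤ q a) (hr : ∀ a, 0 ≤ r a) : jsd q r = 0 ↔ q = r := by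
  rw [jsd_eq_sum_jsdSummand hq hr, mul_eq_zero, or_iff_right (by norm_num),
    sum_eq_zero_iff_of_nonneg fun a _ => jsdSummand_nonneg (hq a) (hr a), funext_iff]
  simp only [mem_univ, true_implies, jsdSummand_eq_zero_iff (hq _) (hr _)]

lemma ContinuousAt.const_mul_log {X : Type*} [TopologicalSpace X] {f : X → ℝ} {x : X}
    (hf : ContinuousAt f x) (a : ℝ) (h : a ≠ 0 → f x ≠ 0) :
    ContinuousAt (fun t => a * Real.log (f t)) x := by
  rcases eq_or_ne a 0 with rfl | ha
  · simpa using continuousAt_const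
  · exact (hf.log (h ha)).const_mul a

section Discriminator

variable {Z : Type} {qs qt : Z → ℝ}

-- Where `qs z + qt z = 0` this is the junk value `0 / 0 = 0`; both weights vanish there.
noncomputable def optimalDiscriminator (qs qt : Z → ℝ) (z : Z) : ℝ :=
  qs z / (qs z + qt z)

lemma optimalDiscriminator_mem_Icc (hqs : ∀ z, 0 ≤ qs z) (hqt : ∀ z, 0 ≤ qt z) (z : Z) :
    optimalDiscriminator qs qt z ∈ Set.Icc 0 1 :=
  ⟨div_nonneg (hqs z) (add_nonneg (hqs z) (hqt z)),
    div_le_one_of_le₀ (le_add_of_nonneg_right (hqt z)) (add_nonneg (hqs z) (hqt z))⟩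

lemma one_sub_optimalDiscriminator {z : Z} (h : qs z + qt z ≠ 0) :
    1 - optimalDiscriminator qs qt z = qt z / (qs z + qt z) := by
  rw [optimalDiscriminator, one_sub_div h, add_sub_cancel_left]

lemma optimalDiscriminator_ne_zero (hqs : ∀ z, 0 ≤ qs z) (hqt : ∀ z, 0 ≤ qt z) {z : Z}
    (h : qs z ≠ 0) : optimalDiscriminator qs qt z ≠ 0 :=
  div_ne_zero h (by linarith [(hqs z).lt_of_ne' h, hqt z])

lemma one_sub_optimalDiscriminator_ne_zero (hqs : ∀ z, 0 ≤ qs z) (hqt : ∀ z, 0 ≤ qt z) {z : Z}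
    (h : qt z ≠ 0) : 1 - optimalDiscriminator qs qt z ≠ 0 := by
  have hc : 0 < qs z + qt z := by linarith [(hqt z).lt_of_ne' h, hqs z]
  rw [one_sub_optimalDiscriminator hc.ne']
  exact div_ne_zero h hc.ne'

lemma continuousAt_advObjective [Fintype Z] {X : Type*} [TopologicalSpace X] {D : X → Z → ℝ}
    {x : X} (hD : ∀ z, ContinuousAt (fun t => D t z) x) (hs : ∀ z, qs z ≠ 0 → D x z ≠ 0)
    (ht : ∀ z, qt z ≠ 0 → 1 - D x z ≠ 0) :
    ContinuousAt (fun t => advObjective qs qt (D t)) x :=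
  (tendsto_finsetSum _ fun z _ => (hD z).const_mul_log (qs z) (hs z)).add
    (tendsto_finsetSum _ fun z _ => (continuousAt_const.sub (hD z)).const_mul_log (qt z) (ht z))

lemma advObjective_le_optimalDiscriminator [Fintype Z] (hqs : ∀ z, 0 ≤ qs z)
    (hqt : ∀ z, 0 ≤ qt z) {D : Z → ℝ} (hD : ∀ z, 0 < D z ∧ D z < 1) :
    advObjective qs qt D ≤ advObjective qs qt (optimalDiscriminator qs qt) := by
  simp only [advObjective, ← sum_add_distrib]
  exact sum_le_sum fun z _ =>
    mul_log_add_mul_log_one_sub_le (hqs z) (hqt z) (hD z).1 (hD z).2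

lemma sSup_advObjective [Fintype Z] (hqs : ∀ z, 0 ≤ qs z) (hqt : ∀ z, 0 ≤ qt z) :
    sSup {v : ℝ | ∃ D : Z → ℝ, (∀ z, 0 < D z ∧ D z < 1) ∧ v = advObjective qs qt D} =
      advObjective qs qt (optimalDiscriminator qs qt) := by
  set S := {v : ℝ | ∃ D : Z → ℝ, (∀ z, 0 < D z ∧ D z < 1) ∧ v = advObjective qs qt D}
  set Dopt := optimalDiscriminator qs qt
  let D : ℝ → Z → ℝ := fun t z => Dopt z + t * (1 / 2 - Dopt z)
  have hD0 : D 0 = Dopt := by simp [D]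
  have hmem : ∀ t ∈ Set.Ioo (0 : ℝ) 1, advObjective qs qt (D t) ∈ S := by
    rintro t ⟨ht0, ht1⟩
    refine ⟨D t, fun z => ?_, rfl⟩
    obtain ⟨h0, h1⟩ := optimalDiscriminator_mem_Icc hqs hqt z
    simp only [D]
    constructor <;> nlinarith
  have hub : ∀ v ∈ S, v ≤ advObjective qs qt Dopt := by
    rintro _ ⟨D, hD, rfl⟩
    exact advObjective_le_optimalDiscriminator hqs hqt hD
  have hcont : ContinuousAt (fun t => advObjective qs qt (D t)) 0 :=
    continuousAt_advObjective (fun z => by fun_prop)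
      (fun z h => hD0 ▸ optimalDiscriminator_ne_zero hqs hqt h)
      (fun z h => hD0 ▸ one_sub_optimalDiscriminator_ne_zero hqs hqt h)
  refine le_antisymm (csSup_le ⟨_, hmem (1 / 2) (by norm_num)⟩ hub) ?_
  have hlim := hcont.tendsto.mono_left (nhdsWithin_le_nhds (s := Set.Ioi 0))
  rw [hD0] at hlim
  refine le_of_tendsto hlim ?_
  filter_upwards [Ioo_mem_nhdsGT one_pos] with t ht
  exact le_csSup ⟨_, hub⟩ (hmem t ht)

lemma advObjective_optimalDiscriminator [Fintype Z] (hqs : ∀ z, 0 ≤ qs z)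
    (hqs1 : ∑ z, qs z = 1) (hqt : ∀ z, 0 ≤ qt z) (hqt1 : ∑ z, qt z = 1) :
    advObjective qs qt (optimalDiscriminator qs qt) = -log 4 + 2 * jsd qs qt := by
  have hzero : ∀ z, qs z + qt z = 0 → qs z = 0 ∧ qt z = 0 := fun z =>
    (add_eq_zero_iff_of_nonneg (hqs z) (hqt z)).1
  have hs : ∀ z, qs z * log (qs z / ((qs z + qt z) / 2)) =
      qs z * log (optimalDiscriminator qs qt z) + qs z * log 2 := fun z =>
    mul_log_div_half fun h => (hzero z h).1
  have ht : ∀ z, qt z * log (qt z / ((qs z + qt z) / 2)) =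
      qt z * log (1 - optimalDiscriminator qs qt z) + qt z * log 2 := by
    intro z
    rw [mul_log_div_half fun h => (hzero z h).2]
    by_cases hc : qs z + qt z = 0
    · simp [(hzero z hc).2]
    · rw [one_sub_optimalDiscriminator hc]
  have hlog4 : log 4 = 2 * log 2 := by
    rw [show (4 : ℝ) = 2 ^ 2 by norm_num, log_pow, Nat.cast_ofNat]
  simp only [jsd, klDiv, advObjective, hs, ht, sum_add_distrib, ← sum_mul, hqs1, hqt1, hlog4]
  ring

end Discriminator

theorem sSup_advObjective_eq_jsd_general
    {Z : Type} [Fintype Z]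
    (qs qt : Z → ℝ) (hqs0 : ∀ z, 0 ≤ qs z) (hqs1 : ∑ z : Z, qs z = 1)
    (hqt0 : ∀ z, 0 ≤ qt z) (hqt1 : ∑ z : Z, qt z = 1) :
    sSup {v : ℝ | ∃ D : Z → ℝ, (∀ z, 0 < D z ∧ D z < 1) ∧ v = advObjective qs qt D} =
        -Real.log 4 + 2 * jsd qs qt ∧
      -Real.log 4 ≤
        sSup {v : ℝ | ∃ D : Z → ℝ, (∀ z, 0 < D z ∧ D z < 1) ∧ v = advObjective qs qt D} ∧
      (sSup {v : ℝ | ∃ D : Z → ℝ, (∀ z, 0 < D z ∧ D z < 1) ∧ v = advObjective qs qt D} =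
          -Real.log 4 ↔ qs = qt) := by
  rw [sSup_advObjective hqs0 hqt0, advObjective_optimalDiscriminator hqs0 hqs1 hqt0 hqt1,
    ← jsd_eq_zero_iff hqs0 hqt0]
  have hjsd := jsd_nonneg hqs0 hqt0
  exact ⟨rfl, by linarith, by constructor <;> intro h <;> linarith⟩

/-- **Optimal adversarial objective value (Goodfellow et al.).**
The supremum of the adversarial objective over discriminators `D : Z → (0,1)` equals
`-log 4 + 2 · JSD(qs ‖ qt)`; consequently it is at least `-log 4`, with equality
if and only if `qs = qt`. -/
theorem sSup_advObjective_eq_jsd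
    {Z : Type} [Fintype Z] [Nonempty Z]
    (qs qt : Z → ℝ) (hqs0 : ∀ z, 0 ≤ qs z) (hqs1 : ∑ z : Z, qs z = 1)
    (hqt0 : ∀ z, 0 ≤ qt z) (hqt1 : ∑ z : Z, qt z = 1) :
    sSup {v : ℝ | ∃ D : Z → ℝ, (∀ z, 0 < D z ∧ D z < 1) ∧ v = advObjective qs qt D} =
        -Real.log 4 + 2 * jsd qs qt ∧
      -Real.log 4 ≤
        sSup {v : ℝ | ∃ D : Z → ℝ, (∀ z, 0 < D z ∧ D z < 1) ∧ v = advObjective qs qt D} ∧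
      (sSup {v : ℝ | ∃ D : Z → ℝ, (∀ z, 0 < D z ∧ D z < 1) ∧ v = advObjective qs qt D} =
          -Real.log 4 ↔ qs = qt) :=
  sSup_advObjective_eq_jsd_general qs qt hqs0 hqs1 hqt0 hqt1
end
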